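/- For all u ∈ [−1,1] one has f_s(u, 1/2) = −a²(1−u²) and f_s(u, 1/(2(1−a²))) = a⁴(1−u²)²/(4(1−a²)). -/

import Mathlib

noncomputable section

open Real Set

/-- A vector in Euclidean 3-space. -/
def v3 (x y z : ℝ) : EuclideanSpace ℝ (Fin 3) := WithLp.toLp 2 ![x, y, z]

/-- Quadratic Bernstein polynomials (parametrized on `[-1,1]`). -/
def bern (i : Fin 3) (u : ℝ) : ℝ :=
  (Nat.choose 2 (i : ℕ)) * ((1 + u) / 2) ^ (i : ℕ) * ((1 - u) / 2) ^ (2 - (i : ℕ))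

/-- Control points `ctrl a α β i j = b i j` of the tensor product quadratic Bézier patch:
`b₀₀ = (-a,-a,√(1-2a²))`, `b₂₀ = (a,-a,√(1-2a²))`, `b₀₂ = (-a,a,√(1-2a²))`,
`b₂₂ = (a,a,√(1-2a²))`, `b₁₀ = α(b₀₀+b₂₀)`, `b₀₁ = α(b₀₀+b₀₂)`, `b₂₁ = α(b₂₀+b₂₂)`,
`b₁₂ = α(b₀₂+b₂₂)`, `b₁₁ = β(0,0,1)`. The first index is the `u`-index. -/
def ctrl (a α β : ℝ) : Fin 3 → Fin 3 → EuclideanSpace ℝ (Fin 3) :=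
  ![![v3 (-a) (-a) (Real.sqrt (1 - 2*a^2)),
     α • (v3 (-a) (-a) (Real.sqrt (1 - 2*a^2)) + v3 (-a) a (Real.sqrt (1 - 2*a^2))),
     v3 (-a) a (Real.sqrt (1 - 2*a^2))],
    ![α • (v3 (-a) (-a) (Real.sqrt (1 - 2*a^2)) + v3 a (-a) (Real.sqrt (1 - 2*a^2))),
     β • v3 0 0 1,
     α • (v3 (-a) a (Real.sqrt (1 - 2*a^2)) + v3 a a (Real.sqrt (1 - 2*a^2)))],
    ![v3 a (-a) (Real.sqrt (1 - 2*a^2)),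
     α • (v3 a (-a) (Real.sqrt (1 - 2*a^2)) + v3 a a (Real.sqrt (1 - 2*a^2))),
     v3 a a (Real.sqrt (1 - 2*a^2))]]

/-- The tensor product quadratic Bézier patch
`p(u,v) = ∑ᵢ ∑ⱼ Bᵢ²(u) Bⱼ²(v) bᵢⱼ`. -/
def bez (a α β u v : ℝ) : EuclideanSpace ℝ (Fin 3) :=
  ∑ i : Fin 3, ∑ j : Fin 3, (bern i u * bern j v) • ctrl a α β i j

/-- The simplified radial error `f(u,v,α,β) = ‖p(u,v)‖² - 1`. -/
def f (a α β u v : ℝ) : ℝ := ‖bez a α β u v‖ ^ 2 - 1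

/-- `f_s(u,α) = f(u,-1,α,β)`; this does not depend on `β` (the control point `b₁₁`
does not contribute on the side `v = -1`), so we take `β = 0`. -/
def fs (a α u : ℝ) : ℝ := f a α 0 u (-1)

/-- `f_d(u,α,β) = f(u,u,α,β)`, the error along the diagonal. -/
def fd (a α β u : ℝ) : ℝ := f a α β u u

/- Along the side `v = -1` the patch is the quadratic Bézier curve with control points
`b₀₀, b₁₀, b₂₀`, which is `(a u, -a w, √(1-2a²) w)` with `w = (1+u²)/2 + α(1-u²)`; hence
`f_s = a²u² + (1-a²)w² - 1`, and both identities are polynomial algebra in `u`. -/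

lemma norm_v3_sq (x y z : ℝ) : ‖v3 x y z‖ ^ 2 = x ^ 2 + y ^ 2 + z ^ 2 := by
  simp [v3, EuclideanSpace.norm_sq_eq, Fin.sum_univ_three]

lemma bez_neg_one (a α β u : ℝ) :
    bez a α β u (-1) =
      v3 (a * u) (-(a * ((1 + u ^ 2) / 2 + α * (1 - u ^ 2))))
        (√(1 - 2 * a ^ 2) * ((1 + u ^ 2) / 2 + α * (1 - u ^ 2))) := by
  ext k
  fin_cases k <;>
  · simp [bez, bern, ctrl, v3, Fin.sum_univ_three]
    ring

lemma fs_eq (a α u : ℝ) (ha : 2 * a ^ 2 ≤ 1) :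
    fs a α u = a ^ 2 * u ^ 2 + (1 - a ^ 2) * ((1 + u ^ 2) / 2 + α * (1 - u ^ 2)) ^ 2 - 1 := by
  have hs : √(1 - 2 * a ^ 2) ^ 2 = 1 - 2 * a ^ 2 := sq_sqrt (by linarith)
  rw [fs, f, bez_neg_one, norm_v3_sq]
  linear_combination ((1 + u ^ 2) / 2 + α * (1 - u ^ 2)) ^ 2 * hs

/-- For all `u ∈ [-1,1]`: `f_s(u, 1/2) = -a²(1-u²)` and
`f_s(u, 1/(2(1-a²))) = a⁴(1-u²)²/(4(1-a²))`. -/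
theorem fs_on_boundary (a : ℝ) (ha : 0 < a) (ha' : a ≤ Real.sqrt 2 / 2) :
    ∀ u ∈ Set.Icc (-1:ℝ) 1,
      fs a (1/2) u = -(a^2*(1 - u^2)) ∧
      fs a (1/(2*(1 - a^2))) u = a^4*(1 - u^2)^2 / (4*(1 - a^2)) := by
  have h2 : 2 * a ^ 2 ≤ 1 := by
    have := pow_le_pow_left₀ ha.le ha' 2
    rw [div_pow, sq_sqrt zero_le_two] at this
    linarith
  have hne : 1 - a ^ 2 ≠ 0 := by nlinarith
  intro u _
  refine ⟨?_, ?_⟩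
  · rw [fs_eq a _ u h2]
    ring
  · rw [fs_eq a _ u h2]
    field_simp
    ring

end
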